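/- arXiv:1207.1305 — 2 statements merged into one kernel-verified Lean document; each statement's English description precedes it below -/
import Mathlib

section
/- The function f(x) = sin(x)·(1 - 1/(8·sin³(x/2))) has a unique critical point θ_c in (0, π); moreover θ_c > 3π/5, f'(x) > 0 on (0, θ_c), and f'(x) < 0 on (θ_c, π). -/
/-!
On `(0, π]` the derivative `f' x = cos x + (3 + cos x) / (16 sin³(x/2))` is strictly decreasing:
`cos` decreases, and so does the fraction, whose numerator decreases while staying positive and
whose denominator increases. As `f' (3π/5) = (13√5 - 29)/8 > 0` and `f' π = -7/8 < 0`, the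
intermediate value theorem places its unique zero in `(3π/5, π)`.
-/

open Real Set

noncomputable def f (x : ℝ) : ℝ := Real.sin x * (1 - 1 / (8 * Real.sin (x/2)^3))

noncomputable def f' (x : ℝ) : ℝ :=
  Real.cos x + (3 + Real.cos x) / (16 * Real.sin (x/2)^3)

lemma hasDerivAt_f {x : ℝ} (hs : Real.sin (x/2) ≠ 0) : HasDerivAt f (f' x) x := by
  have hden := (((hasDerivAt_id' x).div_const 2).sin.fun_pow 3).const_mul 8
  have hf : HasDerivAt (fun y => Real.sin y * (1 - (8 * Real.sin (y/2)^3)⁻¹)) _ x :=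
    (Real.hasDerivAt_sin x).mul
      ((hasDerivAt_const x 1).sub (hden.inv (mul_ne_zero (by norm_num) (pow_ne_zero 3 hs))))
  convert hf using 1
  · funext y; rw [f, one_div]
  have hsin : Real.sin x = 2 * Real.sin (x/2) * Real.cos (x/2) := by
    rw [← Real.sin_two_mul]; ring_nf
  have hcos : Real.cos x = 2 * Real.cos (x/2)^2 - 1 := by
    rw [← Real.cos_two_mul]; ring_nf
  rw [f', hsin, hcos]
  field_simp
  ring

lemma sin_half_pos_of_mem_Ioc {x : ℝ} (hx : x ∈ Ioc 0 π) : 0 < Real.sin (x/2) :=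
  Real.sin_pos_of_pos_of_lt_pi (by linarith [hx.1]) (by linarith [hx.2, Real.pi_pos])

lemma eqOn_deriv_f : EqOn (deriv f) f' (Ioc 0 π) := fun _ hx =>
  (hasDerivAt_f (sin_half_pos_of_mem_Ioc hx).ne').deriv

lemma continuousOn_f' : ContinuousOn f' (Ioc 0 π) :=
  Real.continuous_cos.continuousOn.add <|
    ContinuousOn.div (by fun_prop) (by fun_prop) fun _ hx =>
      mul_ne_zero (by norm_num) (pow_pos (sin_half_pos_of_mem_Ioc hx) 3).ne'

lemma strictAntiOn_f' : StrictAntiOn f' (Ioc 0 π) := by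
  intro x hx y hy hxy
  have hsx := sin_half_pos_of_mem_Ioc hx
  have hsin : Real.sin (x/2) < Real.sin (y/2) :=
    Real.strictMonoOn_sin ⟨by linarith [hx.1, Real.pi_pos], by linarith [hx.2]⟩
      ⟨by linarith [hy.1, Real.pi_pos], by linarith [hy.2]⟩ (by linarith)
  have hcos : Real.cos y < Real.cos x :=
    Real.strictAntiOn_cos ⟨hx.1.le, hx.2⟩ ⟨hy.1.le, hy.2⟩ hxy
  have hfrac : (3 + Real.cos y) / (16 * Real.sin (y/2)^3)
      < (3 + Real.cos x) / (16 * Real.sin (x/2)^3) :=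
    div_lt_div₀ (by linarith) (by gcongr) (by linarith [Real.neg_one_le_cos x]) (by positivity)
  exact add_lt_add hcos hfrac

lemma f'_pi : f' π = -7/8 := by
  norm_num [f', Real.sin_pi_div_two]

lemma f'_three_pi_div_five : f' (3*π/5) = (13 * √5 - 29) / 8 := by
  have h5 : √5 ^ 2 = 5 := Real.sq_sqrt (by norm_num)
  have hcos : Real.cos (3*π/5) = (1 - √5) / 4 := by
    rw [show 3*π/5 = π - 2*(π/5) by ring, Real.cos_pi_sub, Real.cos_two_mul, Real.cos_pi_div_five]
    linear_combination (-1/8) * h5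
  have hsin : Real.sin (3*π/5/2) ^ 3 = (2 + √5) / 8 := by
    rw [show 3*π/5/2 = π/2 - π/5 by ring, Real.sin_pi_div_two_sub, Real.cos_pi_div_five]
    linear_combination ((√5 + 3) / 64) * h5
  rw [f', hcos, hsin]
  field_simp
  linear_combination -960 * h5

lemma f'_three_pi_div_five_pos : 0 < f' (3*π/5) := by
  have h : (29:ℝ) / 13 < √5 := by rw [Real.lt_sqrt] <;> norm_num
  rw [f'_three_pi_div_five]
  linarith

theorem stmt5 : ∃ θc ∈ Ioo (0:ℝ) π,
    deriv f θc = 0 ∧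
    (∀ x ∈ Ioo (0:ℝ) π, deriv f x = 0 → x = θc) ∧
    θc > 3*π/5 ∧
    (∀ x ∈ Ioo (0:ℝ) θc, deriv f x > 0) ∧
    (∀ x ∈ Ioo θc π, deriv f x < 0) := by
  have hsub : Icc (3*π/5) π ⊆ Ioc 0 π := fun x hx => ⟨by linarith [hx.1, Real.pi_pos], hx.2⟩
  obtain ⟨θc, hθ, hzero⟩ : ∃ θc ∈ Ioo (3*π/5) π, f' θc = 0 :=
    intermediate_value_Ioo' (by linarith [Real.pi_pos]) (continuousOn_f'.mono hsub)
      ⟨by rw [f'_pi]; norm_num, f'_three_pi_div_five_pos⟩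
  have hθc : θc ∈ Ioc 0 π := hsub (Ioo_subset_Icc_self hθ)
  refine ⟨θc, ⟨hθc.1, hθ.2⟩, by rw [eqOn_deriv_f hθc, hzero], fun x hx hcrit => ?_, hθ.1,
    fun x hx => ?_, fun x hx => ?_⟩
  · have hx' : x ∈ Ioc 0 π := Ioo_subset_Ioc_self hx
    exact strictAntiOn_f'.injOn hx' hθc (by rw [← eqOn_deriv_f hx', hcrit, hzero])
  · have hx' : x ∈ Ioc 0 π := ⟨hx.1, hx.2.le.trans hθc.2⟩
    rw [eqOn_deriv_f hx', ← hzero]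
    exact strictAntiOn_f' hx' hθc hx.2
  · have hx' : x ∈ Ioc 0 π := ⟨hθc.1.trans hx.1, hx.2.le⟩
    rw [eqOn_deriv_f hx', ← hzero]
    exact strictAntiOn_f' hθc hx' hx.1
end

section
/- If 0 < t₁ < θ_c < t₂ < 2π and f(t₁) ≥ f(t₂), then t₁ + t₂ > 2θ_c > 6π/5, where θ_c is the unique critical point of f in (0, π). -/
/-!
Write `s = sin (x/2)`. Then `f' = cos + φ` with `φ = (2 - s²) / (8 s³)`, and `φ` is strictly
decreasing on `(0, π)` and strictly convex on `(0, 2π)`. So `f'`, like `cos`, is strictly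
decreasing on `(0, π)`; it is positive at `3π/5`, so its zero `θ` lies beyond `3π/5`, and `f`
increases on `(0, θ]`. At `θ` we have `φ θ = -cos θ > 0`, so convexity of `φ` gives
`f' (θ + t) + f' (θ - t) > 2 cos θ cos t + 2 φ θ = 2 cos θ (cos t - 1) ≥ 0`,
i.e. `f (θ + t) > f (θ - t)`. If `t₁ + t₂ ≤ 2θ`, then `f t₁ ≤ f (2θ - t₂) < f t₂`.
-/

open Real Set

theorem apply_sub_lt_apply_add_of_hasDerivAt {g g' : ℝ → ℝ} {θ r : ℝ}
    (hd : ∀ x ∈ Ioo (θ - r) (θ + r), HasDerivAt g (g' x) x)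
    (hpos : ∀ t ∈ Ioo 0 r, 0 < g' (θ + t) + g' (θ - t)) {t : ℝ} (ht : t ∈ Ioo 0 r) :
    g (θ - t) < g (θ + t) := by
  have hG : ∀ u ∈ Ico 0 r,
      HasDerivAt (fun u => g (θ + u) - g (θ - u)) (g' (θ + u) + g' (θ - u)) u := by
    intro u hu
    have hplus := (hd (θ + u) ⟨by linarith [hu.1, hu.2], by linarith [hu.2]⟩).comp_const_add θ u
    have hminus := (hd (θ - u) ⟨by linarith [hu.2], by linarith [hu.1, hu.2]⟩).comp_const_sub θ u
    exact (hplus.fun_sub hminus).congr_deriv (sub_neg_eq_add _ _)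
  have hmono : StrictMonoOn (fun u => g (θ + u) - g (θ - u)) (Ico 0 r) := by
    refine strictMonoOn_of_deriv_pos (convex_Ico 0 r)
      (fun u hu => (hG u hu).continuousAt.continuousWithinAt) fun u hu => ?_
    rw [interior_Ico] at hu
    rw [(hG u (Ioo_subset_Ico_self hu)).deriv]
    exact hpos u hu
  have hlt := hmono ⟨le_rfl, ht.1.trans ht.2⟩ (Ioo_subset_Ico_self ht) ht.1
  simp only [add_zero, sub_zero, sub_self] at hlt
  linarith

noncomputable def phi (x : ℝ) : ℝ := (2 - sin (x/2)^2) / (8 * sin (x/2)^3)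

noncomputable def phi' (x : ℝ) : ℝ := cos (x/2) * (sin (x/2)^2 - 6) / (16 * sin (x/2)^4)

noncomputable def phi'' (x : ℝ) : ℝ :=
  (sin (x/2)^4 - 20 * sin (x/2)^2 + 24) / (32 * sin (x/2)^5)

noncomputable def fDeriv (x : ℝ) : ℝ := cos x + phi x

lemma sin_half_pos {x : ℝ} (h0 : 0 < x) (h2 : x < 2*π) : 0 < sin (x/2) :=
  sin_pos_of_pos_of_lt_pi (by linarith) (by linarith)

lemma sin_eq_two_mul_sin_half_mul_cos_half (x : ℝ) : sin x = 2 * sin (x/2) * cos (x/2) := by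
  rw [← sin_two_mul, mul_div_cancel₀ x two_ne_zero]

lemma cos_eq_one_sub_two_mul_sin_half_sq (x : ℝ) : cos x = 1 - 2 * sin (x/2)^2 := by
  have h := cos_sq (x/2)
  rw [mul_div_cancel₀ x two_ne_zero] at h
  linarith [sin_sq_add_cos_sq (x/2)]

lemma hasDerivAt_sin_half (x : ℝ) : HasDerivAt (fun y => sin (y/2)) (cos (x/2) * (1/2)) x :=
  ((hasDerivAt_id' x).div_const 2).sin

lemma hasDerivAt_cos_half (x : ℝ) : HasDerivAt (fun y => cos (y/2)) (-sin (x/2) * (1/2)) x :=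
  ((hasDerivAt_id' x).div_const 2).cos

lemma hasDerivAt_f_s7 {x : ℝ} (hx : sin (x/2) ≠ 0) : HasDerivAt f (fDeriv x) x := by
  have hden := ((hasDerivAt_sin_half x).fun_pow 3).const_mul 8
  have hquot := ((hasDerivAt_const x (1:ℝ)).fun_div hden (by simp [hx])).const_sub 1
  refine ((hasDerivAt_sin x).fun_mul hquot).congr_deriv ?_
  rw [fDeriv, phi, sin_eq_two_mul_sin_half_mul_cos_half x, cos_eq_one_sub_two_mul_sin_half_sq x]
  field_simp
  linear_combination 3 * sin (x/2)^2 * sin_sq_add_cos_sq (x/2)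

lemma hasDerivAt_phi {x : ℝ} (hx : sin (x/2) ≠ 0) : HasDerivAt phi (phi' x) x := by
  have hnum := ((hasDerivAt_sin_half x).fun_pow 2).const_sub 2
  have hden := ((hasDerivAt_sin_half x).fun_pow 3).const_mul 8
  refine (hnum.fun_div hden (by simp [hx])).congr_deriv ?_
  rw [phi']
  field_simp
  ring

lemma hasDerivAt_phi' {x : ℝ} (hx : sin (x/2) ≠ 0) : HasDerivAt phi' (phi'' x) x := by
  have hnum := (hasDerivAt_cos_half x).fun_mul (((hasDerivAt_sin_half x).fun_pow 2).sub_const 6)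
  have hden := ((hasDerivAt_sin_half x).fun_pow 4).const_mul 16
  refine (hnum.fun_div hden (by simp [hx])).congr_deriv ?_
  rw [phi'']
  field_simp
  rw [cos_sq']
  ring

lemma phi_strictAntiOn : StrictAntiOn phi (Ioo 0 π) := by
  have hπ := pi_pos
  have hs : ∀ x ∈ Ioo 0 π, 0 < sin (x/2) := fun x hx => sin_half_pos hx.1 (by linarith [hx.2])
  have hd : ∀ x ∈ Ioo 0 π, HasDerivAt phi (phi' x) x := fun x hx => hasDerivAt_phi (hs x hx).ne'
  refine strictAntiOn_of_deriv_neg (convex_Ioo 0 π)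
    (fun x hx => (hd x hx).continuousAt.continuousWithinAt) fun x hx => ?_
  rw [interior_Ioo] at hx
  rw [(hd x hx).deriv, phi']
  have hc : 0 < cos (x/2) := cos_pos_of_mem_Ioo ⟨by linarith [hx.1], by linarith [hx.2]⟩
  have hs1 : sin (x/2)^2 ≤ 1 := sin_sq_le_one _
  have hsx := hs x hx
  exact div_neg_of_neg_of_pos (mul_neg_of_pos_of_neg hc (by linarith)) (by positivity)

lemma phi_strictConvexOn : StrictConvexOn ℝ (Ioo 0 (2*π)) phi := by
  have hne : ∀ x ∈ Ioo 0 (2*π), sin (x/2) ≠ 0 := fun x hx => (sin_half_pos hx.1 hx.2).ne'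
  refine strictConvexOn_of_deriv2_pos (convex_Ioo _ _)
    (fun x hx => (hasDerivAt_phi (hne x hx)).continuousAt.continuousWithinAt) fun x hx => ?_
  rw [interior_Ioo] at hx
  have hderiv : deriv phi =ᶠ[nhds x] phi' := by
    filter_upwards [isOpen_Ioo.mem_nhds hx] with y hy
    exact (hasDerivAt_phi (hne y hy)).deriv
  rw [Function.iterate_succ_apply, Function.iterate_one, hderiv.deriv_eq,
    (hasDerivAt_phi' (hne x hx)).deriv, phi'']
  have hs : 0 < sin (x/2) := sin_half_pos hx.1 hx.2
  have hs1 : sin (x/2)^2 ≤ 1 := sin_sq_le_one _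
  apply div_pos _ (by positivity)
  nlinarith

lemma fDeriv_strictAntiOn : StrictAntiOn fDeriv (Ioo 0 π) := by
  have h := phi_strictAntiOn.add_antitone (strictAntiOn_cos.antitoneOn.mono Ioo_subset_Icc_self)
  exact fun x hx y hy hxy => by simpa only [fDeriv, add_comm] using h hx hy hxy

lemma fDeriv_three_pi_div_five_pos : 0 < fDeriv (3*π/5) := by
  have hsin : sin (3*π/5/2) = (1 + √5)/4 := by
    rw [show 3*π/5/2 = π/2 - π/5 by ring, sin_pi_div_two_sub, cos_pi_div_five]
  rw [fDeriv, phi, cos_eq_one_sub_two_mul_sin_half_sq, hsin]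
  set c := (1 + √5)/4
  have h5 : √5 ^ 2 = 5 := sq_sqrt (by norm_num)
  have hc0 : 0 < c := by positivity
  have hc2 : 4 * c^2 = 2 * c + 1 := by linear_combination h5 / 4
  have hc : c < 5/6 := by nlinarith [sqrt_nonneg 5]
  have hnum : (1 - 2 * c^2) * (8 * c^3) + (2 - c^2) = (5 - 6 * c)/4 := by
    linear_combination (-4 * c^3 - 2 * c^2 - 3/4) * hc2
  rw [show 1 - 2 * c^2 + (2 - c^2) / (8 * c^3) = ((1 - 2 * c^2) * (8 * c^3) + (2 - c^2)) / (8 * c^3)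
    by field_simp, hnum]
  exact div_pos (by linarith) (by positivity)

lemma f_strictMonoOn_Ioc {θ : ℝ} (hθ : θ ∈ Ioo 0 π) (hcrit : fDeriv θ = 0) :
    StrictMonoOn f (Ioc 0 θ) := by
  have hd : ∀ x ∈ Ioc 0 θ, HasDerivAt f (fDeriv x) x := fun x hx =>
    hasDerivAt_f_s7 (sin_half_pos hx.1 (by linarith [hx.2, hθ.2, pi_pos])).ne'
  refine strictMonoOn_of_deriv_pos (convex_Ioc 0 θ)
    (fun x hx => (hd x hx).continuousAt.continuousWithinAt) fun x hx => ?_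
  rw [interior_Ioc] at hx
  rw [(hd x (Ioo_subset_Ioc_self hx)).deriv, ← hcrit]
  exact fDeriv_strictAntiOn ⟨hx.1, hx.2.trans hθ.2⟩ hθ hx.2

lemma fDeriv_add_fDeriv_sub_pos {θ t : ℝ} (hcos : cos θ ≤ 0) (hcrit : fDeriv θ = 0)
    (ht : t ∈ Ioo 0 θ) (hθt : θ + t < 2*π) : 0 < fDeriv (θ + t) + fDeriv (θ - t) := by
  have hmid := phi_strictConvexOn.2 (x := θ - t) (y := θ + t)
    ⟨by linarith [ht.2], by linarith [ht.1]⟩ ⟨by linarith [ht.1, ht.2], hθt⟩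
    (by linarith [ht.1]) one_half_pos one_half_pos (add_halves 1)
  rw [smul_eq_mul, smul_eq_mul, smul_eq_mul, smul_eq_mul,
    show 1/2 * (θ - t) + 1/2 * (θ + t) = θ by ring] at hmid
  have hcos_sum : cos (θ + t) + cos (θ - t) = 2 * cos θ * cos t := by
    rw [cos_add, cos_sub]; ring
  have hphi : phi θ = -cos θ := by rw [fDeriv] at hcrit; linarith
  have hcos_t : 0 ≤ -cos θ * (1 - cos t) := mul_nonneg (by linarith) (by linarith [cos_le_one t])
  simp only [fDeriv]
  linarith

lemma f_sub_lt_f_add {θ t : ℝ} (hθ : θ ∈ Ioo (π/2) π) (hcrit : fDeriv θ = 0)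
    (ht : t ∈ Ioo 0 θ) : f (θ - t) < f (θ + t) := by
  have hcos : cos θ < 0 := cos_neg_of_pi_div_two_lt_of_lt hθ.1 (by linarith [hθ.2, pi_pos])
  refine apply_sub_lt_apply_add_of_hasDerivAt (g' := fDeriv) (fun x hx => ?_) (fun s hs => ?_) ht
  · exact hasDerivAt_f_s7 (sin_half_pos (by linarith [hx.1]) (by linarith [hx.2, hθ.2])).ne'
  · exact fDeriv_add_fDeriv_sub_pos hcos.le hcrit hs (by linarith [hs.2, hθ.2])

theorem stmt7_general (θc t1 t2 : ℝ)
    (hθc : θc ∈ Ioo (0:ℝ) π) (hcrit : deriv f θc = 0)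
    (h1 : 0 < t1) (h3 : θc < t2)
    (hf : f t1 ≥ f t2) :
    t1 + t2 > 2*θc ∧ 2*θc > 6*π/5 := by
  have hπ := pi_pos
  have hcrit' : fDeriv θc = 0 := by
    rwa [(hasDerivAt_f_s7 (sin_half_pos hθc.1 (by linarith [hθc.2])).ne').deriv] at hcrit
  have hθ : 3*π/5 < θc := by
    by_contra! h
    have := fDeriv_strictAntiOn.antitoneOn hθc (b := 3*π/5) ⟨by positivity, by linarith⟩ h
    linarith [fDeriv_three_pi_div_five_pos]
  refine ⟨?_, by linarith⟩
  by_contra! hsum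
  have hreflect := f_sub_lt_f_add (t := t2 - θc) ⟨by linarith, hθc.2⟩ hcrit'
    ⟨by linarith, by linarith⟩
  have hmono := (f_strictMonoOn_Ioc hθc hcrit').monotoneOn (a := t1) (b := θc - (t2 - θc))
    ⟨h1, by linarith⟩ ⟨by linarith, by linarith⟩ (by linarith)
  rw [add_sub_cancel] at hreflect
  linarith

theorem stmt7 (θc t1 t2 : ℝ)
    (hθc : θc ∈ Ioo (0:ℝ) π) (hcrit : deriv f θc = 0)
    (huniq : ∀ x ∈ Ioo (0:ℝ) π, deriv f x = 0 → x = θc)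
    (h1 : 0 < t1) (h2 : t1 < θc) (h3 : θc < t2) (h4 : t2 < 2*π)
    (hf : f t1 ≥ f t2) :
    t1 + t2 > 2*θc ∧ 2*θc > 6*π/5 :=
  stmt7_general θc t1 t2 hθc hcrit h1 h3 hf
end
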